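/- arXiv:1701.02860 — 2 statements merged into one kernel-verified Lean document; each statement's English description precedes it below -/
import Mathlib

section
/- Let α > 0 and let u : ℝ → ℝ be differentiable on the interval [-1,1] with derivative u′ continuous on [-1,1]. Then (1/2)·∫_{-1}^{1} (u′(x))² dx + α·u(-1)² ≥ (α/(4α+1))·u(1)². -/
open Set intervalIntegral

/-- If `u` is differentiable on `[-1,1]` with derivative `u'` continuous on `[-1,1]`, then for
`α > 0`, `(1/2)·∫_{-1}^1 (u'(x))² dx + α·u(-1)² ≥ (α/(4α+1))·u(1)²`. -/
theorem stmt_4 (α : ℝ) (hα : 0 < α) (u u' : ℝ → ℝ)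
    (hderiv : ∀ x ∈ Icc (-1 : ℝ) 1, HasDerivWithinAt u (u' x) (Icc (-1 : ℝ) 1) x)
    (hcont : ContinuousOn u' (Icc (-1 : ℝ) 1)) :
    (1 / 2) * (∫ x in (-1 : ℝ)..1, (u' x) ^ 2) + α * (u (-1)) ^ 2 ≥
      (α / (4 * α + 1)) * (u 1) ^ 2 := by
  have h1 : (-1:ℝ) ≤ 1 := by norm_num
  have huIcc : uIcc (-1:ℝ) 1 = Icc (-1:ℝ) 1 := uIcc_of_le h1
  have hucont : ContinuousOn u (Icc (-1:ℝ) 1) := fun x hx => (hderiv x hx).continuousWithinAt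
  have hint : IntervalIntegrable u' MeasureTheory.volume (-1) 1 := by
    apply ContinuousOn.intervalIntegrable
    rwa [huIcc]
  have hftc : ∫ x in (-1:ℝ)..1, u' x = u 1 - u (-1) := by
    apply intervalIntegral.integral_eq_sub_of_hasDeriv_right_of_le h1 hucont _ hint
    intro x hx
    exact (hderiv x (Ioo_subset_Icc_self hx)).mono_of_mem_nhdsWithin
      (nhdsWithin_le_nhds (Icc_mem_nhds hx.1 hx.2))
  set b := ∫ x in (-1:ℝ)..1, u' x with hb
  set I2 := ∫ x in (-1:ℝ)..1, (u' x)^2 with hI2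
  have hint2 : IntervalIntegrable (fun x => (u' x)^2) MeasureTheory.volume (-1) 1 := by
    apply ContinuousOn.intervalIntegrable
    rw [huIcc]; exact hcont.pow 2
  have hintc : IntervalIntegrable (fun x => b * u' x) MeasureTheory.volume (-1) 1 :=
    hint.const_mul b
  have h0 : (0:ℝ) ≤ ∫ x in (-1:ℝ)..1, (u' x - b/2)^2 := by
    apply intervalIntegral.integral_nonneg h1
    intro x _; positivity
  have hexp : ∫ x in (-1:ℝ)..1, (u' x - b/2)^2 = I2 - b * b + (b/2)^2 * 2 := by
    have heq : ∀ x : ℝ, (u' x - b/2)^2 = (u' x)^2 - b * u' x + (b/2)^2 := by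
      intro x; ring
    simp_rw [heq]
    rw [intervalIntegral.integral_add (hint2.sub hintc)
      (intervalIntegrable_const), intervalIntegral.integral_sub hint2 hintc,
      intervalIntegral.integral_const_mul, intervalIntegral.integral_const]
    simp only [smul_eq_mul, ← hb, ← hI2]
    ring
  have hCS : b^2 ≤ 2 * I2 := by nlinarith [h0, hexp]
  have hu1 : u 1 = u (-1) + b := by rw [hftc]; ring
  rw [hu1]
  rw [ge_iff_le, div_mul_eq_mul_div, div_le_iff₀ (by linarith : (0:ℝ) < 4*α+1)]
  nlinarith [sq_nonneg (b - 4*α*(u (-1))), sq_nonneg (u (-1)), hCS, hα.le]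
end

section
/- Let α > 0 and β > 0. Consider the functional J(u) = (1/2)·∫_{-1}^{1} (u′(x))² dx + α·u(-1)² over functions u : ℝ → ℝ that are differentiable on [-1,1] with continuous derivative on [-1,1] and satisfy the constraint β·u(1)² = 1. Then the infimum of J over this class equals α/(β(4α+1)), and it is attained by the affine function u₀(x) = (1 + 2α(x+1))/(√β·(4α+1)), which satisfies u₀(1) = 1/√β, u₀(-1) = 1/(√β(4α+1)), and J(u₀) = α/(β(4α+1)). -/
open Set intervalIntegral

/-!
By the fundamental theorem of calculus and Cauchy–Schwarz, `(u 1 - u (-1))² ≤ 2 ∫_{-1}^1 u'²`,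
with equality for affine `u`. Hence `J u ≥ (b - a)² / 4 + α a²` with `a = u (-1)`, `b = u 1`,
and minimising this over `a` gives `α b² / (4α + 1) = α / (β (4α + 1))`, attained at
`a = b / (4α + 1)`, which is the affine `u₀`.
-/

theorem sq_integral_le_mul_integral_sq {g : ℝ → ℝ} {a b : ℝ} (hab : a ≤ b)
    (hg : ContinuousOn g (Icc a b)) :
    (∫ x in a..b, g x) ^ 2 ≤ (b - a) * ∫ x in a..b, g x ^ 2 := by
  have huIcc : uIcc a b = Icc a b := uIcc_of_le hab
  have hg_int : IntervalIntegrable g MeasureTheory.volume a b :=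
    (hg.mono huIcc.subset).intervalIntegrable
  have hg2_int : IntervalIntegrable (fun x => g x ^ 2) MeasureTheory.volume a b :=
    ((hg.pow 2).mono huIcc.subset).intervalIntegrable
  set I := ∫ x in a..b, g x
  set D := ∫ x in a..b, g x ^ 2
  -- `∫ (g - t)² ≥ 0` for every constant `t` is a nonnegative quadratic in `t`.
  have hquad : ∀ t : ℝ, 0 ≤ D - 2 * t * I + t ^ 2 * (b - a) := by
    intro t
    have hexpand : (∫ x in a..b, (g x - t) ^ 2) = D - 2 * t * I + t ^ 2 * (b - a) := by
      have hsplit : (fun x => (g x - t) ^ 2) = fun x => (g x ^ 2 - 2 * t * g x) + t ^ 2 := by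
        funext x; ring
      rw [hsplit, integral_add (hg2_int.sub (hg_int.const_mul _)) intervalIntegrable_const,
        integral_sub hg2_int (hg_int.const_mul _), integral_const_mul, integral_const,
        smul_eq_mul]
      ring
    rw [← hexpand]
    exact integral_nonneg hab fun x _ => sq_nonneg _
  rcases hab.eq_or_lt with rfl | hlt
  · simp [I]
  · have h := hquad (I / (b - a))
    have hba : 0 < b - a := sub_pos.2 hlt
    field_simp at h
    nlinarith

theorem sq_sub_le_mul_integral_sq_deriv {u u' : ℝ → ℝ} {a b : ℝ} (hab : a ≤ b)
    (hu : ∀ x ∈ Icc a b, HasDerivWithinAt u (u' x) (Icc a b) x)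
    (hu' : ContinuousOn u' (Icc a b)) :
    (u b - u a) ^ 2 ≤ (b - a) * ∫ x in a..b, u' x ^ 2 := by
  have hftc : (∫ x in a..b, u' x) = u b - u a :=
    integral_eq_sub_of_hasDerivAt_of_le hab (fun x hx => (hu x hx).continuousWithinAt)
      (fun x hx => (hu x (Ioo_subset_Icc_self hx)).hasDerivAt (Icc_mem_nhds hx.1 hx.2))
      ((hu'.mono (uIcc_of_le hab).subset).intervalIntegrable)
  rw [← hftc]
  exact sq_integral_le_mul_integral_sq hab hu'

/-- Equality holds iff `a = b / (4α + 1)`. -/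
theorem mul_sq_div_le_sq_sub_div_four_add_mul_sq {α : ℝ} (hα : 0 < 4 * α + 1) (a b : ℝ) :
    α * b ^ 2 / (4 * α + 1) ≤ (b - a) ^ 2 / 4 + α * a ^ 2 := by
  rw [div_le_iff₀ hα]
  nlinarith [sq_nonneg ((4 * α + 1) * a - b)]

theorem energy_lower_bound {α β : ℝ} (hα : 0 < 4 * α + 1) {u u' : ℝ → ℝ}
    (hu : ∀ x ∈ Icc (-1 : ℝ) 1, HasDerivWithinAt u (u' x) (Icc (-1 : ℝ) 1) x)
    (hu' : ContinuousOn u' (Icc (-1 : ℝ) 1)) (hconstr : β * u 1 ^ 2 = 1) :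
    α / (β * (4 * α + 1)) ≤ (1 / 2) * (∫ x in (-1 : ℝ)..1, u' x ^ 2) + α * u (-1) ^ 2 := by
  have hβ : β ≠ 0 := left_ne_zero_of_mul_eq_one hconstr
  have hb : u 1 ^ 2 = 1 / β := by field_simp; linarith
  have hcs := sq_sub_le_mul_integral_sq_deriv (by norm_num) hu hu'
  calc α / (β * (4 * α + 1)) = α * u 1 ^ 2 / (4 * α + 1) := by
        rw [hb]; field_simp
    _ ≤ (u 1 - u (-1)) ^ 2 / 4 + α * u (-1) ^ 2 :=
        mul_sq_div_le_sq_sub_div_four_add_mul_sq hα _ _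
    _ ≤ (1 / 2) * (∫ x in (-1 : ℝ)..1, u' x ^ 2) + α * u (-1) ^ 2 := by
        norm_num at hcs; linarith

/-- For `α, β > 0`, the infimum of `J(u) = (1/2)∫_{-1}^1 (u')² + α u(-1)²` over functions `u`
differentiable on `[-1,1]` with continuous derivative there and satisfying `β·u(1)² = 1`
equals `α/(β(4α+1))`, and it is attained by `u₀(x) = (1 + 2α(x+1))/(√β·(4α+1))`, which satisfies
`u₀(1) = 1/√β`, `u₀(-1) = 1/(√β(4α+1))` and `J(u₀) = α/(β(4α+1))`. -/
theorem stmt_5 (α β : ℝ) (hα : 0 < α) (hβ : 0 < β)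
    (u₀ : ℝ → ℝ) (hu₀ : u₀ = fun x => (1 + 2 * α * (x + 1)) / (Real.sqrt β * (4 * α + 1))) :
    IsLeast
      {y : ℝ | ∃ u u' : ℝ → ℝ,
        (∀ x ∈ Icc (-1 : ℝ) 1, HasDerivWithinAt u (u' x) (Icc (-1 : ℝ) 1) x) ∧
        ContinuousOn u' (Icc (-1 : ℝ) 1) ∧
        β * (u 1) ^ 2 = 1 ∧
        y = (1 / 2) * (∫ x in (-1 : ℝ)..1, (u' x) ^ 2) + α * (u (-1)) ^ 2}
      (α / (β * (4 * α + 1))) ∧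
    u₀ 1 = 1 / Real.sqrt β ∧
    u₀ (-1) = 1 / (Real.sqrt β * (4 * α + 1)) ∧
    β * (u₀ 1) ^ 2 = 1 ∧
    (1 / 2) * (∫ x in (-1 : ℝ)..1, (deriv u₀ x) ^ 2) + α * (u₀ (-1)) ^ 2 =
      α / (β * (4 * α + 1)) := by
  have hs2 : Real.sqrt β ^ 2 = β := Real.sq_sqrt hβ.le
  have hderiv : ∀ x, HasDerivAt u₀ (2 * α / (Real.sqrt β * (4 * α + 1))) x := fun x => by
    subst hu₀
    simpa using ((((hasDerivAt_id x).add_const 1).const_mul (2 * α)).const_add 1).div_const _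
  have hval1 : u₀ 1 = 1 / Real.sqrt β := by subst hu₀; field_simp; ring
  have hvalm1 : u₀ (-1) = 1 / (Real.sqrt β * (4 * α + 1)) := by subst hu₀; norm_num
  have hconstr : β * u₀ 1 ^ 2 = 1 := by rw [hval1, div_pow, hs2]; field_simp
  have henergy : (1 / 2) * (∫ _ in (-1 : ℝ)..1, (2 * α / (Real.sqrt β * (4 * α + 1))) ^ 2) +
      α * u₀ (-1) ^ 2 = α / (β * (4 * α + 1)) := by
    rw [integral_const, hvalm1, smul_eq_mul]
    field_simp
    rw [hs2]
    ring
  refine ⟨⟨⟨u₀, fun _ => 2 * α / (Real.sqrt β * (4 * α + 1)),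
      fun x _ => (hderiv x).hasDerivWithinAt, continuousOn_const, hconstr, henergy.symm⟩, ?_⟩,
    hval1, hvalm1, hconstr, ?_⟩
  · rintro y ⟨u, u', hu, hu', hconstr, rfl⟩
    exact energy_lower_bound (by linarith) hu hu' hconstr
  · simpa only [fun x => (hderiv x).deriv] using henergy
end
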